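/- The Lindenbaum–Tarski construction yields a heterogeneous LRC-algebra: the relation ⊣⊢ on formula terms (A ⊣⊢ A' iff A ⊢_LRC A' and A' ⊢_LRC A) and on resource terms (α ⊣⊢ α' iff α ⊢ α' and α' ⊢ α are derivable) is compatible with all the connectives ∧, ∨, →, ⊓, ⊔, ·, ▷, ◇, ▷', ◇' (so the quotient operations are well defined), and the quotient structure F* = (Fm/⊣⊢, Res/⊣⊢, ▷*, ◇*, ▷'*, ◇'*) with the induced operations is a heterogeneous LRC-algebra. -/

import Mathlib

/-! ## Syntax of LRC: resource terms and formula terms -/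

/-- Resource terms of LRC: atomic resources, units `1` and `0`, fusion `·`,
join `⊔` and meet `⊓`. -/
inductive ResTerm : Type where
  | atom : ℕ → ResTerm
  | one : ResTerm
  | zero : ResTerm
  | mul : ResTerm → ResTerm → ResTerm
  | rjoin : ResTerm → ResTerm → ResTerm
  | rmeet : ResTerm → ResTerm → ResTerm

/-- Formula terms of LRC: atomic propositions, `⊤`, `⊥`, `∨`, `∧`, `→`,
`α ▷ A` (`box`), `◇A` (`dia`), `◇'α` (`diaR`), `α ▷' β` (`boxR`). -/
inductive FmTerm : Type where
  | atom : ℕ → FmTerm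
  | top : FmTerm
  | bot : FmTerm
  | or : FmTerm → FmTerm → FmTerm
  | and : FmTerm → FmTerm → FmTerm
  | imp : FmTerm → FmTerm → FmTerm
  | box : ResTerm → FmTerm → FmTerm
  | dia : FmTerm → FmTerm
  | diaR : ResTerm → FmTerm
  | boxR : ResTerm → ResTerm → FmTerm

/-! ## The Hilbert system H.LRC -/

/-- The pure-resource entailment relation of H.LRC: the least preorder on
resource terms containing the lattice entailments for `⊔`,`⊓` (R1),
associativity of `·` with unit `1` (R2), `α ⊢ 1` and `0 ⊢ α` (R3),
distribution of `·` over `⊔` (R4), closed under the monotonicity rules for `·`. -/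
inductive RDer : ResTerm → ResTerm → Prop where
  | refl (α) : RDer α α
  | trans {α β γ} : RDer α β → RDer β γ → RDer α γ
  | le_one (α) : RDer α .one
  | zero_le (α) : RDer .zero α
  | meet_le_left (α β) : RDer (.rmeet α β) α
  | meet_le_right (α β) : RDer (.rmeet α β) β
  | le_meet {γ α β} : RDer γ α → RDer γ β → RDer γ (.rmeet α β)
  | le_join_left (α β) : RDer α (.rjoin α β)
  | le_join_right (α β) : RDer β (.rjoin α β)
  | join_le {α β γ} : RDer α γ → RDer β γ → RDer (.rjoin α β) γ
  | distrib (α β γ) :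
      RDer (.rmeet α (.rjoin β γ)) (.rjoin (.rmeet α β) (.rmeet α γ))
  | mul_assoc₁ (α β γ) : RDer (.mul (.mul α β) γ) (.mul α (.mul β γ))
  | mul_assoc₂ (α β γ) : RDer (.mul α (.mul β γ)) (.mul (.mul α β) γ)
  | mul_one₁ (α) : RDer (.mul α .one) α
  | mul_one₂ (α) : RDer α (.mul α .one)
  | one_mul₁ (α) : RDer (.mul .one α) α
  | one_mul₂ (α) : RDer α (.mul .one α)
  | mul_join_left (α β γ) :
      RDer (.mul α (.rjoin β γ)) (.rjoin (.mul α β) (.mul α γ))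
  | mul_join_right (α β γ) :
      RDer (.mul (.rjoin β γ) α) (.rjoin (.mul β α) (.mul γ α))
  | mul_mono_left {α β} (γ) : RDer α β → RDer (.mul α γ) (.mul β γ)
  | mul_mono_right {α β} (γ) : RDer α β → RDer (.mul γ α) (.mul γ β)

/-- The consequence relation of the Hilbert system H.LRC on formula terms:
`FDer A B` holds iff `A ⊢_LRC B`, i.e. a proof of `B` exists in H.LRC which
possibly uses `A`.  It is axiomatised as the least preorder containing the
intuitionistic entailments and the axiom schemas D1-D4, B1-B7, BD1, BD2
(as schemas, so closure under uniform substitution is automatic), closed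
under the monotonicity/antitonicity rules MB, MD, AB, MD', MB', AB'. -/
inductive FDer : FmTerm → FmTerm → Prop where
  | refl (A) : FDer A A
  | trans {A B C} : FDer A B → FDer B C → FDer A C
  -- intuitionistic propositional logic
  | le_top (A) : FDer A .top
  | bot_le (A) : FDer .bot A
  | and_le_left (A B) : FDer (.and A B) A
  | and_le_right (A B) : FDer (.and A B) B
  | le_and {C A B} : FDer C A → FDer C B → FDer C (.and A B)
  | le_or_left (A B) : FDer A (.or A B)
  | le_or_right (A B) : FDer B (.or A B)
  | or_le {A B C} : FDer A C → FDer B C → FDer (.or A B) C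
  | imp_intro {C A B} : FDer (.and C A) B → FDer C (.imp A B)
  | imp_elim {C A B} : FDer C (.imp A B) → FDer (.and C A) B
  -- axiom schemas for ◇ and ◇'
  | d1₁ (A B) : FDer (.dia (.or A B)) (.or (.dia A) (.dia B))
  | d1₂ (A B) : FDer (.or (.dia A) (.dia B)) (.dia (.or A B))
  | d2 : FDer (.dia .bot) .bot
  | d3₁ (α β) : FDer (.diaR (.rjoin α β)) (.or (.diaR α) (.diaR β))
  | d3₂ (α β) : FDer (.or (.diaR α) (.diaR β)) (.diaR (.rjoin α β))
  | d4 : FDer (.diaR .zero) .bot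
  -- axiom schemas for ▷ and ▷'
  | b1₁ (α β A) : FDer (.box (.rjoin α β) A) (.and (.box α A) (.box β A))
  | b1₂ (α β A) : FDer (.and (.box α A) (.box β A)) (.box (.rjoin α β) A)
  | b2 (A) : FDer .top (.box .zero A)
  | b3 (α β A) : FDer (.box α (.box β A)) (.box (.mul α β) A)
  | b4₁ (α β γ) : FDer (.boxR (.rjoin α β) γ) (.and (.boxR α γ) (.boxR β γ))
  | b4₂ (α β γ) : FDer (.and (.boxR α γ) (.boxR β γ)) (.boxR (.rjoin α β) γ)
  | b5 (α) : FDer .top (.boxR .zero α)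
  | b6₁ (α β γ) : FDer (.boxR α (.rmeet β γ)) (.and (.boxR α β) (.boxR α γ))
  | b6₂ (α β γ) : FDer (.and (.boxR α β) (.boxR α γ)) (.boxR α (.rmeet β γ))
  | b7 (α) : FDer .top (.boxR α .one)
  -- interaction axiom schemas
  | bd1 (α A) : FDer (.and (.diaR α) (.box α A)) (.dia A)
  | bd2 (α β) : FDer (.boxR α β) (.box α (.diaR β))
  -- monotonicity rules
  | mb {A B} (α) : FDer A B → FDer (.box α A) (.box α B)
  | md {A B} : FDer A B → FDer (.dia A) (.dia B)
  | ab (A) {α β} : RDer α β → FDer (.box β A) (.box α A)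
  | mdr {α β} : RDer α β → FDer (.diaR α) (.diaR β)
  | mbr (γ) {α β} : RDer α β → FDer (.boxR γ α) (.boxR γ β)
  | abr (γ) {α β} : RDer α β → FDer (.boxR β γ) (.boxR α γ)

/-- `A` is a theorem of the Hilbert system H.LRC. -/
def LRCThm (A : FmTerm) : Prop := FDer .top A
/-! ## Heterogeneous LRC-algebras -/

/-- A heterogeneous LRC-algebra `F = (W, R, ▷, ◇, ▷', ◇')`: `W` is a Heyting
algebra, `R` is a bounded distributive lattice with an associative product
`·` (here `mul`) preserving finite joins in each coordinate whose unit is the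
top element `1 = ⊤` of `R`; `◇ : W → W` (`dia`) and `◇' : R → W` (`diaR`)
preserve finite joins; `▷ : R × W → W` (`box`) turns finite joins in its first
coordinate into meets and is monotone in its second coordinate;
`▷' : R × R → W` (`boxR`) turns finite joins in its first coordinate into
meets and preserves finite meets in its second coordinate; and the axioms
B3, BD1, BD2 hold. -/
structure LRCAlgebra (W : Type*) (R : Type*) [iW : HeytingAlgebra W]
    [iR : DistribLattice R] [iB : BoundedOrder R] where
  mul : R → R → R
  mul_assoc : ∀ a b c, mul (mul a b) c = mul a (mul b c)
  mul_top : ∀ a, mul a ⊤ = a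
  top_mul : ∀ a, mul ⊤ a = a
  mul_sup_left : ∀ a b c, mul (a ⊔ b) c = mul a c ⊔ mul b c
  mul_sup_right : ∀ a b c, mul a (b ⊔ c) = mul a b ⊔ mul a c
  mul_bot_left : ∀ a, mul ⊥ a = ⊥
  mul_bot_right : ∀ a, mul a ⊥ = ⊥
  dia : W → W
  dia_bot : dia ⊥ = ⊥
  dia_sup : ∀ a b, dia (a ⊔ b) = dia a ⊔ dia b
  diaR : R → W
  diaR_bot : diaR ⊥ = ⊥
  diaR_sup : ∀ a b, diaR (a ⊔ b) = diaR a ⊔ diaR b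
  box : R → W → W
  box_sup : ∀ α β a, box (α ⊔ β) a = box α a ⊓ box β a
  box_bot : ∀ a, box ⊥ a = ⊤
  box_mono : ∀ (α : R) {a b : W}, a ≤ b → box α a ≤ box α b
  boxR : R → R → W
  boxR_sup : ∀ α β γ, boxR (α ⊔ β) γ = boxR α γ ⊓ boxR β γ
  boxR_bot : ∀ γ, boxR ⊥ γ = ⊤
  boxR_inf : ∀ α β γ, boxR α (β ⊓ γ) = boxR α β ⊓ boxR α γ
  boxR_top : ∀ α, boxR α ⊤ = ⊤
  b3 : ∀ α β a, box α (box β a) ≤ box (mul α β) a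
  bd1 : ∀ α a, diaR α ⊓ box α a ≤ dia a
  bd2 : ∀ α β, boxR α β ≤ box α (diaR β)

/-! ## Statement 4: the Lindenbaum–Tarski construction -/

/-- Interderivability `⊣⊢` of formula terms. -/
instance fmSetoid : Setoid FmTerm where
  r A B := FDer A B ∧ FDer B A
  iseqv :=
    ⟨fun A => ⟨.refl A, .refl A⟩, fun h => ⟨h.2, h.1⟩,
      fun h₁ h₂ => ⟨h₁.1.trans h₂.1, h₂.2.trans h₁.2⟩⟩

/-- Interderivability `⊣⊢` of resource terms. -/
instance resSetoid : Setoid ResTerm where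
  r α β := RDer α β ∧ RDer β α
  iseqv :=
    ⟨fun α => ⟨.refl α, .refl α⟩, fun h => ⟨h.2, h.1⟩,
      fun h₁ h₂ => ⟨h₁.1.trans h₂.1, h₂.2.trans h₁.2⟩⟩

/-- The Lindenbaum–Tarski quotient of formula terms. -/
abbrev FmQuot : Type := Quotient fmSetoid

/-- The Lindenbaum–Tarski quotient of resource terms. -/
abbrev ResQuot : Type := Quotient resSetoid


/-! Derivability preorders the terms, and the laws of an LRC-algebra are exactly the axiom schemas
of H.LRC read as inequalities between terms. The monotonicity rules make every connective respect
`⊣⊢`, so the connectives descend to the antisymmetrizations `Fm/⊣⊢` and `Res/⊣⊢`, where the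
inequalities become the defining equations and inequalities of the algebra. -/

namespace Antisymmetrization

variable {α : Type*} [Preorder α]

abbrev lattice (sup inf : α → α → α)
    (le_sup_left : ∀ a b, a ≤ sup a b) (le_sup_right : ∀ a b, b ≤ sup a b)
    (sup_le : ∀ {a b c}, a ≤ c → b ≤ c → sup a b ≤ c)
    (inf_le_left : ∀ a b, inf a b ≤ a) (inf_le_right : ∀ a b, inf a b ≤ b)
    (le_inf : ∀ {a b c}, a ≤ b → a ≤ c → a ≤ inf b c) :
    Lattice (Antisymmetrization α (· ≤ ·)) :=
  have sup_mono {a a' b b'} (ha : a ≤ a') (hb : b ≤ b') : sup a b ≤ sup a' b' :=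
    sup_le (ha.trans (le_sup_left a' b')) (hb.trans (le_sup_right a' b'))
  have inf_mono {a a' b b'} (ha : a ≤ a') (hb : b ≤ b') : inf a b ≤ inf a' b' :=
    le_inf ((inf_le_left a b).trans ha) ((inf_le_right a b).trans hb)
  { sup := Quotient.map₂ sup fun _ _ ha _ _ hb => ⟨sup_mono ha.1 hb.1, sup_mono ha.2 hb.2⟩
    inf := Quotient.map₂ inf fun _ _ ha _ _ hb => ⟨inf_mono ha.1 hb.1, inf_mono ha.2 hb.2⟩
    le_sup_left a b := Quotient.inductionOn₂ a b le_sup_left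
    le_sup_right a b := Quotient.inductionOn₂ a b le_sup_right
    sup_le a b c := Quotient.inductionOn₃ a b c fun _ _ _ => sup_le
    inf_le_left a b := Quotient.inductionOn₂ a b inf_le_left
    inf_le_right a b := Quotient.inductionOn₂ a b inf_le_right
    le_inf a b c := Quotient.inductionOn₃ a b c fun _ _ _ => le_inf }

end Antisymmetrization

namespace FDer

theorem and_mono {A A' B B'} (hA : FDer A A') (hB : FDer B B') :
    FDer (.and A B) (.and A' B') :=
  .le_and ((and_le_left A B).trans hA) ((and_le_right A B).trans hB)

theorem or_mono {A A' B B'} (hA : FDer A A') (hB : FDer B B') :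
    FDer (.or A B) (.or A' B') :=
  .or_le (hA.trans (le_or_left A' B')) (hB.trans (le_or_right A' B'))

theorem imp_mono {A A' B B'} (hA : FDer A' A) (hB : FDer B B') :
    FDer (.imp A B) (.imp A' B') :=
  imp_intro (((and_mono (refl _) hA).trans (imp_elim (refl _))).trans hB)

theorem box_mono {α α' A A'} (hα : RDer α' α) (hA : FDer A A') :
    FDer (.box α A) (.box α' A') :=
  (mb α hA).trans (ab A' hα)

theorem boxR_mono {α α' β β'} (hα : RDer α' α) (hβ : RDer β β') :
    FDer (.boxR α β) (.boxR α' β') :=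
  (mbr α hβ).trans (abr β' hα)

end FDer

namespace RDer

theorem mul_mono {α α' β β'} (hα : RDer α α') (hβ : RDer β β') :
    RDer (.mul α β) (.mul α' β') :=
  (mul_mono_left β hα).trans (mul_mono_right α' hβ)

theorem join_mono {α α' β β'} (hα : RDer α α') (hβ : RDer β β') :
    RDer (.rjoin α β) (.rjoin α' β') :=
  join_le (hα.trans (le_join_left α' β')) (hβ.trans (le_join_right α' β'))

theorem meet_mono {α α' β β'} (hα : RDer α α') (hβ : RDer β β') :
    RDer (.rmeet α β) (.rmeet α' β') :=
  le_meet ((meet_le_left α β).trans hα) ((meet_le_right α β).trans hβ)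

theorem zero_mul (α) : RDer (.mul .zero α) .zero :=
  (mul_mono_right .zero (le_one α)).trans (mul_one₁ .zero)

theorem mul_zero (α) : RDer (.mul α .zero) .zero :=
  (mul_mono_left .zero (le_one α)).trans (one_mul₁ .zero)

end RDer

namespace FmTerm

-- Not an instance: `FmQuot` would then pick up Mathlib's preorder on quotients of preorders.
abbrev derivabilityPreorder : Preorder FmTerm where
  le := FDer
  le_refl := FDer.refl
  le_trans _ _ _ := FDer.trans

variable {A A' B B' : FmTerm} {α α' β β' : ResTerm}

theorem and_congr (hA : A ≈ A') (hB : B ≈ B') : and A B ≈ and A' B' :=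
  ⟨FDer.and_mono hA.1 hB.1, FDer.and_mono hA.2 hB.2⟩

theorem or_congr (hA : A ≈ A') (hB : B ≈ B') : or A B ≈ or A' B' :=
  ⟨FDer.or_mono hA.1 hB.1, FDer.or_mono hA.2 hB.2⟩

theorem imp_congr (hA : A ≈ A') (hB : B ≈ B') : imp A B ≈ imp A' B' :=
  ⟨FDer.imp_mono hA.2 hB.1, FDer.imp_mono hA.1 hB.2⟩

theorem dia_congr (hA : A ≈ A') : dia A ≈ dia A' :=
  ⟨FDer.md hA.1, FDer.md hA.2⟩

theorem box_congr (hα : α ≈ α') (hA : A ≈ A') : box α A ≈ box α' A' :=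
  ⟨FDer.box_mono hα.2 hA.1, FDer.box_mono hα.1 hA.2⟩

theorem diaR_congr (hα : α ≈ α') : diaR α ≈ diaR α' :=
  ⟨FDer.mdr hα.1, FDer.mdr hα.2⟩

theorem boxR_congr (hα : α ≈ α') (hβ : β ≈ β') : boxR α β ≈ boxR α' β' :=
  ⟨FDer.boxR_mono hα.2 hβ.1, FDer.boxR_mono hα.1 hβ.2⟩

end FmTerm

namespace ResTerm

abbrev entailmentPreorder : Preorder ResTerm where
  le := RDer
  le_refl := RDer.refl
  le_trans _ _ _ := RDer.trans

variable {α α' β β' : ResTerm}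

theorem rmeet_congr (hα : α ≈ α') (hβ : β ≈ β') : rmeet α β ≈ rmeet α' β' :=
  ⟨RDer.meet_mono hα.1 hβ.1, RDer.meet_mono hα.2 hβ.2⟩

theorem rjoin_congr (hα : α ≈ α') (hβ : β ≈ β') : rjoin α β ≈ rjoin α' β' :=
  ⟨RDer.join_mono hα.1 hβ.1, RDer.join_mono hα.2 hβ.2⟩

theorem mul_congr (hα : α ≈ α') (hβ : β ≈ β') : mul α β ≈ mul α' β' :=
  ⟨RDer.mul_mono hα.1 hβ.1, RDer.mul_mono hα.2 hβ.2⟩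

end ResTerm

instance FmQuot.instHeytingAlgebra : HeytingAlgebra FmQuot :=
  letI := FmTerm.derivabilityPreorder
  let himp : FmQuot → FmQuot → FmQuot :=
    Quotient.map₂ .imp fun _ _ hA _ _ hB => FmTerm.imp_congr hA hB
  { (Antisymmetrization.lattice .or .and FDer.le_or_left FDer.le_or_right FDer.or_le
      FDer.and_le_left FDer.and_le_right FDer.le_and : Lattice FmQuot) with
    top := ⟦.top⟧
    le_top a := Quotient.inductionOn a FDer.le_top
    bot := ⟦.bot⟧
    bot_le a := Quotient.inductionOn a FDer.bot_le
    himp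
    le_himp_iff a b c := Quotient.inductionOn₃ a b c fun _ _ _ => ⟨FDer.imp_elim, FDer.imp_intro⟩
    compl a := himp a ⟦.bot⟧
    himp_bot _ := rfl }

instance ResQuot.instDistribLattice : DistribLattice ResQuot :=
  letI := ResTerm.entailmentPreorder
  letI : Lattice ResQuot := Antisymmetrization.lattice .rjoin .rmeet RDer.le_join_left
    RDer.le_join_right RDer.join_le RDer.meet_le_left RDer.meet_le_right RDer.le_meet
  .ofInfSupLe fun a b c => Quotient.inductionOn₃ a b c RDer.distrib

instance ResQuot.instBoundedOrder : BoundedOrder ResQuot where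
  top := ⟦.one⟧
  le_top a := Quotient.inductionOn a RDer.le_one
  bot := ⟦.zero⟧
  bot_le a := Quotient.inductionOn a RDer.zero_le

def lindenbaumLRCAlgebra : LRCAlgebra FmQuot ResQuot where
  mul := Quotient.map₂ .mul fun _ _ hα _ _ hβ => ResTerm.mul_congr hα hβ
  mul_assoc a b c := Quotient.inductionOn₃ a b c fun α β γ =>
    Quotient.sound ⟨RDer.mul_assoc₁ α β γ, RDer.mul_assoc₂ α β γ⟩
  mul_top a := Quotient.inductionOn a fun α => Quotient.sound ⟨RDer.mul_one₁ α, RDer.mul_one₂ α⟩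
  top_mul a := Quotient.inductionOn a fun α => Quotient.sound ⟨RDer.one_mul₁ α, RDer.one_mul₂ α⟩
  mul_sup_left a b c := Quotient.inductionOn₃ a b c fun α β γ =>
    Quotient.sound ⟨RDer.mul_join_right γ α β,
      RDer.join_le (RDer.mul_mono_left γ (RDer.le_join_left α β))
        (RDer.mul_mono_left γ (RDer.le_join_right α β))⟩
  mul_sup_right a b c := Quotient.inductionOn₃ a b c fun α β γ =>
    Quotient.sound ⟨RDer.mul_join_left α β γ,
      RDer.join_le (RDer.mul_mono_right α (RDer.le_join_left β γ))
        (RDer.mul_mono_right α (RDer.le_join_right β γ))⟩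
  mul_bot_left a := Quotient.inductionOn a fun α => Quotient.sound ⟨RDer.zero_mul α, RDer.zero_le _⟩
  mul_bot_right a :=
    Quotient.inductionOn a fun α => Quotient.sound ⟨RDer.mul_zero α, RDer.zero_le _⟩
  dia := Quotient.map .dia fun _ _ => FmTerm.dia_congr
  dia_bot := Quotient.sound ⟨FDer.d2, FDer.bot_le _⟩
  dia_sup a b := Quotient.inductionOn₂ a b fun A B => Quotient.sound ⟨FDer.d1₁ A B, FDer.d1₂ A B⟩
  diaR := Quotient.map .diaR fun _ _ => FmTerm.diaR_congr
  diaR_bot := Quotient.sound ⟨FDer.d4, FDer.bot_le _⟩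
  diaR_sup a b := Quotient.inductionOn₂ a b fun α β => Quotient.sound ⟨FDer.d3₁ α β, FDer.d3₂ α β⟩
  box := Quotient.map₂ .box fun _ _ hα _ _ hA => FmTerm.box_congr hα hA
  box_sup a b c := Quotient.inductionOn₃ a b c fun α β A =>
    Quotient.sound ⟨FDer.b1₁ α β A, FDer.b1₂ α β A⟩
  box_bot a := Quotient.inductionOn a fun A => Quotient.sound ⟨FDer.le_top _, FDer.b2 A⟩
  box_mono a {b c} := Quotient.inductionOn₃ a b c fun α _ _ => FDer.mb α
  boxR := Quotient.map₂ .boxR fun _ _ hα _ _ hβ => FmTerm.boxR_congr hα hβ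
  boxR_sup a b c := Quotient.inductionOn₃ a b c fun α β γ =>
    Quotient.sound ⟨FDer.b4₁ α β γ, FDer.b4₂ α β γ⟩
  boxR_bot a := Quotient.inductionOn a fun γ => Quotient.sound ⟨FDer.le_top _, FDer.b5 γ⟩
  boxR_inf a b c := Quotient.inductionOn₃ a b c fun α β γ =>
    Quotient.sound ⟨FDer.b6₁ α β γ, FDer.b6₂ α β γ⟩
  boxR_top a := Quotient.inductionOn a fun α => Quotient.sound ⟨FDer.le_top _, FDer.b7 α⟩
  b3 a b c := Quotient.inductionOn₃ a b c FDer.b3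
  bd1 a b := Quotient.inductionOn₂ a b FDer.bd1
  bd2 a b := Quotient.inductionOn₂ a b FDer.bd2

/-- **The Lindenbaum–Tarski construction yields a heterogeneous
LRC-algebra**: the relation `⊣⊢` on formula terms and on resource terms is
compatible with all the connectives `∧, ∨, →, ⊓, ⊔, ·, ▷, ◇, ▷', ◇'` (so the
quotient operations are well defined), and the quotient structure
`F* = (Fm/⊣⊢, Res/⊣⊢, ▷*, ◇*, ▷'*, ◇'*)` with the induced operations is a
heterogeneous LRC-algebra. -/
theorem lindenbaum_tarski :
    -- compatibility of `⊣⊢` with the connectives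
    (∀ A A' B B' : FmTerm, A ≈ A' → B ≈ B' →
      FmTerm.and A B ≈ FmTerm.and A' B' ∧
      FmTerm.or A B ≈ FmTerm.or A' B' ∧
      FmTerm.imp A B ≈ FmTerm.imp A' B') ∧
    (∀ A A' : FmTerm, A ≈ A' → FmTerm.dia A ≈ FmTerm.dia A') ∧
    (∀ α α' β β' : ResTerm, α ≈ α' → β ≈ β' →
      ResTerm.rmeet α β ≈ ResTerm.rmeet α' β' ∧
      ResTerm.rjoin α β ≈ ResTerm.rjoin α' β' ∧
      ResTerm.mul α β ≈ ResTerm.mul α' β') ∧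
    (∀ (α α' : ResTerm) (A A' : FmTerm), α ≈ α' → A ≈ A' →
      FmTerm.box α A ≈ FmTerm.box α' A') ∧
    (∀ α α' : ResTerm, α ≈ α' → FmTerm.diaR α ≈ FmTerm.diaR α') ∧
    (∀ α α' β β' : ResTerm, α ≈ α' → β ≈ β' →
      FmTerm.boxR α β ≈ FmTerm.boxR α' β') ∧
    -- the quotient structure is a heterogeneous LRC-algebra with the
    -- induced operations
    (∃ (iA : HeytingAlgebra FmQuot) (iQ : DistribLattice ResQuot),
      letI := iA
      letI := iQ
      ∃ iB : BoundedOrder ResQuot,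
        letI := iB
        ∃ G : LRCAlgebra FmQuot ResQuot,
          -- the order and the Heyting structure on `Fm/⊣⊢` are induced by
          -- the derivability relation
          (∀ A B : FmTerm, (⟦A⟧ : FmQuot) ≤ ⟦B⟧ ↔ FDer A B) ∧
          (∀ A B : FmTerm, (⟦A⟧ : FmQuot) ⊓ ⟦B⟧ = ⟦FmTerm.and A B⟧) ∧
          (∀ A B : FmTerm, (⟦A⟧ : FmQuot) ⊔ ⟦B⟧ = ⟦FmTerm.or A B⟧) ∧
          (∀ A B : FmTerm, (⟦A⟧ : FmQuot) ⇨ ⟦B⟧ = ⟦FmTerm.imp A B⟧) ∧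
          ((⊤ : FmQuot) = ⟦FmTerm.top⟧) ∧
          ((⊥ : FmQuot) = ⟦FmTerm.bot⟧) ∧
          -- the order and lattice structure on `Res/⊣⊢` are induced by the
          -- resource entailment relation
          (∀ α β : ResTerm, (⟦α⟧ : ResQuot) ≤ ⟦β⟧ ↔ RDer α β) ∧
          (∀ α β : ResTerm, (⟦α⟧ : ResQuot) ⊓ ⟦β⟧ = ⟦ResTerm.rmeet α β⟧) ∧
          (∀ α β : ResTerm, (⟦α⟧ : ResQuot) ⊔ ⟦β⟧ = ⟦ResTerm.rjoin α β⟧) ∧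
          ((⊤ : ResQuot) = ⟦ResTerm.one⟧) ∧
          ((⊥ : ResQuot) = ⟦ResTerm.zero⟧) ∧
          -- the operations of `G` are the induced ones
          (∀ α β : ResTerm, G.mul ⟦α⟧ ⟦β⟧ = (⟦ResTerm.mul α β⟧ : ResQuot)) ∧
          (∀ A : FmTerm, G.dia ⟦A⟧ = (⟦FmTerm.dia A⟧ : FmQuot)) ∧
          (∀ α : ResTerm, G.diaR ⟦α⟧ = (⟦FmTerm.diaR α⟧ : FmQuot)) ∧
          (∀ (α : ResTerm) (A : FmTerm),
            G.box ⟦α⟧ ⟦A⟧ = (⟦FmTerm.box α A⟧ : FmQuot)) ∧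
          (∀ α β : ResTerm, G.boxR ⟦α⟧ ⟦β⟧ = (⟦FmTerm.boxR α β⟧ : FmQuot))) := by
  refine ⟨fun _ _ _ _ hA hB =>
      ⟨FmTerm.and_congr hA hB, FmTerm.or_congr hA hB, FmTerm.imp_congr hA hB⟩,
    fun _ _ => FmTerm.dia_congr,
    fun _ _ _ _ hα hβ =>
      ⟨ResTerm.rmeet_congr hα hβ, ResTerm.rjoin_congr hα hβ, ResTerm.mul_congr hα hβ⟩,
    fun _ _ _ _ => FmTerm.box_congr, fun _ _ => FmTerm.diaR_congr,
    fun _ _ _ _ => FmTerm.boxR_congr,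
    inferInstance, inferInstance, inferInstance, lindenbaumLRCAlgebra, ?_⟩
  exact ⟨fun _ _ => .rfl, fun _ _ => rfl, fun _ _ => rfl, fun _ _ => rfl, rfl, rfl,
    fun _ _ => .rfl, fun _ _ => rfl, fun _ _ => rfl, rfl, rfl,
    fun _ _ => rfl, fun _ => rfl, fun _ => rfl, fun _ _ => rfl, fun _ _ => rfl⟩
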